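/- Let g : [−1,1]^{r−1} × S^{2n₁+1} × ⋯ × S^{2n_r+1} × D^{2k} → D^{2(|n̄|+k+r)} be defined by g(t₂,…,t_r, y₁,…,y_r, x) = ((M/L)(t₂y₂,…,t_r y_r, x), √(1−M²)·y₁), where L = ‖(t₂y₂,…,t_r y_r, x)‖ and M = max{|t₂|,…,|t_r|, ‖x‖} (with value (0,…,0,y₁) when L = 0). Then g is well-defined (lands in the unit sphere S^{2(|n̄|+k+r)−1} since ‖y_i‖=1), continuous, and equivariant for the diagonal S¹-action (trivial on the cube): g(t̄, λȳ, λx) = λ·g(t̄, ȳ, x) for λ ∈ S¹. -/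

import Mathlib

noncomputable section

open Metric

variable (R k : ℕ) (n : Fin (R + 1) → ℕ)

/-- The middle block `ℂ^{n₂+1} × ⋯ × ℂ^{n_r+1}` with the Euclidean (`L²`) norm. -/
abbrev midSpace := PiLp 2 (fun i : Fin R => EuclideanSpace ℂ (Fin (n i.succ + 1)))

/-- `(ℂ^{n₂+1} × ⋯ × ℂ^{n_r+1}) × ℂ^k` with the Euclidean norm. -/
abbrev bigSpace := WithLp 2 (midSpace R n × EuclideanSpace ℂ (Fin k))

/-- The target `ℂ^{|n̄|+k+r}`, decomposed as the first `|n̄|−n₁+k+r−1` complex coordinates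
followed by the last `n₁+1`, with the Euclidean norm. -/
abbrev targetSpace := WithLp 2 (bigSpace R k n × EuclideanSpace ℂ (Fin (n 0 + 1)))

/-- The vector `(t₂y₂,…,t_ry_r,x)`. -/
def uVec (t : Fin R → ℝ)
    (y : ∀ i : Fin (R + 1), sphere (0 : EuclideanSpace ℂ (Fin (n i + 1))) 1)
    (x : EuclideanSpace ℂ (Fin k)) : bigSpace R k n :=
  (WithLp.equiv 2 _).symm
    ((WithLp.equiv 2 _).symm
        (fun i : Fin R => t i • (y i.succ : EuclideanSpace ℂ (Fin (n i.succ + 1)))), x)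

/-- `M = max{|t₂|,…,|t_r|,‖x‖}`. -/
def maxM (t : Fin R → ℝ) (x : EuclideanSpace ℂ (Fin k)) : ℝ :=
  max ‖x‖ (⨆ i : Fin R, |t i|)

/-- The map `g(t̄,ȳ,x) = ((M/L)(t₂y₂,…,t_ry_r,x), √(1−M²)·y₁)`, where
`L = ‖(t₂y₂,…,t_ry_r,x)‖` (with value `(0,…,0,y₁)` when `L = 0`). -/
def gMap (t : Fin R → ℝ)
    (y : ∀ i : Fin (R + 1), sphere (0 : EuclideanSpace ℂ (Fin (n i + 1))) 1)
    (x : EuclideanSpace ℂ (Fin k)) : targetSpace R k n :=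
  (WithLp.equiv 2 _).symm
    ((maxM R k t x / ‖uVec R k n t y x‖) • uVec R k n t y x,
     Real.sqrt (1 - maxM R k t x ^ 2) • (y 0 : EuclideanSpace ℂ (Fin (n 0 + 1))))

lemma norm_y (y : ∀ i : Fin (R + 1), sphere (0 : EuclideanSpace ℂ (Fin (n i + 1))) 1)
    (i : Fin (R + 1)) : ‖(y i : EuclideanSpace ℂ (Fin (n i + 1)))‖ = 1 :=
  mem_sphere_zero_iff_norm.mp (y i).2

lemma norm_uVec_sq (t : Fin R → ℝ)
    (y : ∀ i : Fin (R + 1), sphere (0 : EuclideanSpace ℂ (Fin (n i + 1))) 1)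
    (x : EuclideanSpace ℂ (Fin k)) :
    ‖uVec R k n t y x‖ ^ 2 = (∑ i, t i ^ 2) + ‖x‖ ^ 2 := by
  rw [uVec, WithLp.prod_norm_sq_eq_of_L2]
  congr 1
  rw [show ((WithLp.equiv 2 ((midSpace R n) × EuclideanSpace ℂ (Fin k))).symm
      ((WithLp.equiv 2 _).symm
        (fun i : Fin R => t i • (y i.succ : EuclideanSpace ℂ (Fin (n i.succ + 1)))), x)).fst
      = (WithLp.equiv 2 _).symm
        (fun i : Fin R => t i • (y i.succ : EuclideanSpace ℂ (Fin (n i.succ + 1)))) from rfl,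
    PiLp.norm_sq_eq_of_L2]
  refine Finset.sum_congr rfl fun i _ => ?_
  rw [show ((WithLp.equiv 2 _).symm
      (fun i : Fin R => t i • (y i.succ : EuclideanSpace ℂ (Fin (n i.succ + 1))))) i
      = t i • (y i.succ : EuclideanSpace ℂ (Fin (n i.succ + 1))) from rfl]
  rw [norm_smul, Real.norm_eq_abs, norm_y, mul_one, sq_abs]

lemma maxM_nonneg (t : Fin R → ℝ) (x : EuclideanSpace ℂ (Fin k)) : 0 ≤ maxM R k t x :=
  le_trans (norm_nonneg x) (le_max_left _ _)

lemma maxM_le_norm_uVec (t : Fin R → ℝ)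
    (y : ∀ i : Fin (R + 1), sphere (0 : EuclideanSpace ℂ (Fin (n i + 1))) 1)
    (x : EuclideanSpace ℂ (Fin k)) : maxM R k t x ≤ ‖uVec R k n t y x‖ := by
  have hL : 0 ≤ ‖uVec R k n t y x‖ := norm_nonneg _
  have hLsq := norm_uVec_sq R k n t y x
  have hsum : (0:ℝ) ≤ ∑ i, t i ^ 2 := Finset.sum_nonneg fun i _ => sq_nonneg _
  refine max_le ?_ ?_
  · nlinarith [norm_nonneg x]
  · rcases isEmpty_or_nonempty (Fin R) with hR | hR
    · simp [ciSup_of_empty, Real.sSup_empty, hL]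
    · refine ciSup_le fun i => ?_
      have h1 : t i ^ 2 ≤ ∑ j, t j ^ 2 :=
        Finset.single_le_sum (fun j _ => sq_nonneg (t j)) (Finset.mem_univ i)
      nlinarith [abs_nonneg (t i), sq_abs (t i), sq_nonneg ‖x‖]

lemma maxM_le_one (t : Fin R → ℝ) (x : EuclideanSpace ℂ (Fin k))
    (ht : ∀ i, |t i| ≤ 1) (hx : ‖x‖ ≤ 1) : maxM R k t x ≤ 1 := by
  refine max_le hx ?_
  rcases isEmpty_or_nonempty (Fin R) with hR | hR
  · simp [ciSup_of_empty, Real.sSup_empty]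
  · exact ciSup_le ht

lemma norm_scaled (t : Fin R → ℝ)
    (y : ∀ i : Fin (R + 1), sphere (0 : EuclideanSpace ℂ (Fin (n i + 1))) 1)
    (x : EuclideanSpace ℂ (Fin k)) :
    ‖(maxM R k t x / ‖uVec R k n t y x‖) • uVec R k n t y x‖ = maxM R k t x := by
  by_cases hL : ‖uVec R k n t y x‖ = 0
  · have hM : maxM R k t x = 0 :=
      le_antisymm (hL ▸ maxM_le_norm_uVec R k n t y x) (maxM_nonneg R k t x)
    simp [norm_eq_zero.mp hL, hM]
  · rw [norm_smul, Real.norm_eq_abs, abs_div, abs_of_nonneg (maxM_nonneg R k t x),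
      abs_of_nonneg (norm_nonneg _), div_mul_cancel₀ _ hL]

/-- The map `g` lands in the unit sphere, is continuous, and is equivariant for the
diagonal `S¹`-action (trivial on the cube). -/
theorem gMap_properties :
    (∀ (t : Fin R → ℝ)
       (y : ∀ i : Fin (R + 1), sphere (0 : EuclideanSpace ℂ (Fin (n i + 1))) 1)
       (x : EuclideanSpace ℂ (Fin k)), (∀ i, |t i| ≤ 1) → ‖x‖ ≤ 1 →
        ‖gMap R k n t y x‖ = 1) ∧
    Continuous (fun p : (Fin R → ℝ) ×
        (∀ i : Fin (R + 1), sphere (0 : EuclideanSpace ℂ (Fin (n i + 1))) 1) ×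
        EuclideanSpace ℂ (Fin k) => gMap R k n p.1 p.2.1 p.2.2) ∧
    (∀ (t : Fin R → ℝ)
       (y y' : ∀ i : Fin (R + 1), sphere (0 : EuclideanSpace ℂ (Fin (n i + 1))) 1)
       (x : EuclideanSpace ℂ (Fin k)) (l : ℂ), ‖l‖ = 1 →
        (∀ i, (y' i : EuclideanSpace ℂ (Fin (n i + 1))) =
            l • (y i : EuclideanSpace ℂ (Fin (n i + 1)))) →
        gMap R k n t y' (l • x) = l • gMap R k n t y x) := by
  refine ⟨?_, ?_, ?_⟩
  · -- norm one
    intro t y x ht hx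
    have hM1 : maxM R k t x ≤ 1 := maxM_le_one R k t x ht hx
    have hM0 : 0 ≤ maxM R k t x := maxM_nonneg R k t x
    have h1M : 0 ≤ 1 - maxM R k t x ^ 2 := by nlinarith
    have hsq : ‖gMap R k n t y x‖ ^ 2 = 1 := by
      rw [gMap, WithLp.prod_norm_sq_eq_of_L2]
      rw [show ((WithLp.equiv 2 ((bigSpace R k n) × EuclideanSpace ℂ (Fin (n 0 + 1)))).symm
          ((maxM R k t x / ‖uVec R k n t y x‖) • uVec R k n t y x,
           Real.sqrt (1 - maxM R k t x ^ 2) • (y 0 : EuclideanSpace ℂ (Fin (n 0 + 1))))).fst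
          = (maxM R k t x / ‖uVec R k n t y x‖) • uVec R k n t y x from rfl]
      rw [show ((WithLp.equiv 2 ((bigSpace R k n) × EuclideanSpace ℂ (Fin (n 0 + 1)))).symm
          ((maxM R k t x / ‖uVec R k n t y x‖) • uVec R k n t y x,
           Real.sqrt (1 - maxM R k t x ^ 2) • (y 0 : EuclideanSpace ℂ (Fin (n 0 + 1))))).snd
          = Real.sqrt (1 - maxM R k t x ^ 2) • (y 0 : EuclideanSpace ℂ (Fin (n 0 + 1))) from rfl]
      rw [norm_scaled, norm_smul, Real.norm_eq_abs, abs_of_nonneg (Real.sqrt_nonneg _),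
        norm_y, mul_one, Real.sq_sqrt h1M]
      ring
    nlinarith [norm_nonneg (gMap R k n t y x)]
  · -- continuity
    set P := (Fin R → ℝ) ×
        (∀ i : Fin (R + 1), sphere (0 : EuclideanSpace ℂ (Fin (n i + 1))) 1) ×
        EuclideanSpace ℂ (Fin k)
    have hu : Continuous (fun p : P => uVec R k n p.1 p.2.1 p.2.2) := by
      unfold uVec
      refine Continuous.comp (WithLp.prod_continuous_toLp _ _ _) ?_
      refine Continuous.prodMk ?_ (continuous_snd.comp continuous_snd)
      refine (PiLp.continuous_toLp _ _).comp ?_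
      refine continuous_pi fun i => ?_
      exact ((continuous_apply i).comp continuous_fst).smul
        (continuous_subtype_val.comp ((continuous_apply i.succ).comp
          (continuous_fst.comp continuous_snd)))
    have hsup : Continuous (fun t : Fin R → ℝ => ⨆ i, |t i|) := by
      rcases isEmpty_or_nonempty (Fin R) with hR | hR
      · simpa [ciSup_of_empty, Real.sSup_empty] using (continuous_const : Continuous fun _ : Fin R → ℝ => (0:ℝ))
      · have he : (fun t : Fin R → ℝ => ⨆ i, |t i|)
            = fun t => Finset.univ.sup' Finset.univ_nonempty (fun i => |t i|) := by
          funext t; rw [Finset.sup'_univ_eq_ciSup]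
        rw [he]
        exact Continuous.finset_sup'_apply _ fun i _ => (continuous_apply i).abs
    have hM : Continuous (fun p : P => maxM R k p.1 p.2.2) := by
      unfold maxM
      exact (continuous_norm.comp (continuous_snd.comp continuous_snd)).max
        (hsup.comp continuous_fst)
    have h1 : Continuous (fun p : P =>
        (maxM R k p.1 p.2.2 / ‖uVec R k n p.1 p.2.1 p.2.2‖) • uVec R k n p.1 p.2.1 p.2.2) := by
      rw [continuous_iff_continuousAt]
      intro p₀
      by_cases h0 : ‖uVec R k n p₀.1 p₀.2.1 p₀.2.2‖ = 0
      · have hval : (maxM R k p₀.1 p₀.2.2 / ‖uVec R k n p₀.1 p₀.2.1 p₀.2.2‖)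
            • uVec R k n p₀.1 p₀.2.1 p₀.2.2 = 0 := by
          rw [norm_eq_zero.mp h0, smul_zero]
        rw [ContinuousAt, hval]
        refine squeeze_zero_norm (a := fun p : P => ‖uVec R k n p.1 p.2.1 p.2.2‖) (fun p => ?_) ?_
        · rw [norm_scaled]
          exact maxM_le_norm_uVec R k n p.1 p.2.1 p.2.2
        · have := (hu.norm.tendsto p₀)
          rwa [h0] at this
      · exact ((hM.continuousAt.div (hu.norm.continuousAt) h0)).smul hu.continuousAt
    have h2 : Continuous (fun p : P => Real.sqrt (1 - maxM R k p.1 p.2.2 ^ 2)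
        • (p.2.1 0 : EuclideanSpace ℂ (Fin (n 0 + 1)))) :=
      (Real.continuous_sqrt.comp (continuous_const.sub (hM.pow 2))).smul
        (continuous_subtype_val.comp ((continuous_apply 0).comp
          (continuous_fst.comp continuous_snd)))
    unfold gMap
    exact Continuous.comp (WithLp.prod_continuous_toLp _ _ _) (h1.prodMk h2)
  · -- equivariance
    intro t y y' x l hl hy
    have hfun : (fun i : Fin R => t i • (y' i.succ : EuclideanSpace ℂ (Fin (n i.succ + 1))))
        = l • (fun i : Fin R => t i • (y i.succ : EuclideanSpace ℂ (Fin (n i.succ + 1)))) := by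
      funext i
      rw [Pi.smul_apply, hy, smul_comm]
    have hu : uVec R k n t y' (l • x) = l • uVec R k n t y x := by
      unfold uVec
      simp only [hfun, WithLp.equiv_symm_apply, WithLp.toLp_smul, ← Prod.smul_mk]
    have hMeq : maxM R k t (l • x) = maxM R k t x := by
      unfold maxM
      rw [norm_smul, hl, one_mul]
    unfold gMap
    rw [hu, hMeq, norm_smul, hl, one_mul,
      smul_comm (maxM R k t x / ‖uVec R k n t y x‖) l (uVec R k n t y x), hy 0,
      smul_comm (Real.sqrt (1 - maxM R k t x ^ 2)) l
        (y 0 : EuclideanSpace ℂ (Fin (n 0 + 1))),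
      ← Prod.smul_mk, WithLp.equiv_symm_apply, WithLp.toLp_smul]
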